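/- arXiv:2303.14282 — 4 statements merged into one kernel-verified Lean document; each statement's English description precedes it below -/
import Mathlib

section
/- For every λ > 0 and every x in the slab Ω = {x ∈ ℝ³ : |x₃| < 1}, setting a = 1/(1+x₃) and b = 1/(1−x₃), the multiset of eigenvalues of the real symmetric matrix D²Φ(x) is {0, Λ₊, Λ₋}, where Λ± = 2λ [ 1/(1−x₃²) + (a³/2)x₁² + (b³/2)x₂² ± ( (1/4)(2abx₃ + (b³x₂² − a³x₁²))² + a³b³x₁²x₂² )^{1/2} ]. -/
/-- The potential `Φ(x) = λ x₁²/(1+x₃) + λ x₂²/(1−x₃)`. -/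
noncomputable def Phi (l : ℝ) (x : EuclideanSpace ℝ (Fin 3)) : ℝ :=
  l * (x 0) ^ 2 / (1 + x 2) + l * (x 1) ^ 2 / (1 - x 2)

/-- The Hessian matrix of a function on `ℝⁿ`, with entries the second partial derivatives. -/
noncomputable def hess {n : ℕ} (f : EuclideanSpace ℝ (Fin n) → ℝ)
    (x : EuclideanSpace ℝ (Fin n)) : Matrix (Fin n) (Fin n) ℝ :=
  Matrix.of fun i j =>
    fderiv ℝ (fun y => fderiv ℝ f y (EuclideanSpace.single j 1)) x (EuclideanSpace.single i 1)

/-- `Λ₊` and `Λ₋`: the two nonzero eigenvalues of `D²Φ`, with sign `s = 1` resp. `s = -1`,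
where `a = 1/(1+x₃)`, `b = 1/(1−x₃)`. -/
noncomputable def Lam (l : ℝ) (x : EuclideanSpace ℝ (Fin 3)) (s : ℝ) : ℝ :=
  (1 / (1 + x 2)) |> fun a => (1 / (1 - x 2)) |> fun b =>
  2 * l * (1 / (1 - (x 2) ^ 2) + a ^ 3 / 2 * (x 0) ^ 2 + b ^ 3 / 2 * (x 1) ^ 2 +
    s * Real.sqrt ((1 / 4) * (2 * a * b * x 2 + (b ^ 3 * (x 1) ^ 2 - a ^ 3 * (x 0) ^ 2)) ^ 2 +
      a ^ 3 * b ^ 3 * (x 0) ^ 2 * (x 1) ^ 2))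

/-! Off the planes `x₃ = ±1` the second derivatives of `Φ` are read off from derivatives along
lines. The Hessian is singular: each summand `λ s²/(1 ± x₃)` is homogeneous of degree one in
`(s, 1 ± x₃)`, so `Φ` is affine along the line through `x` in direction
`(x₁/(1+x₃), −x₂/(1−x₃), 1)`. Hence its characteristic polynomial is `X (X² − τ X + σ)`, where
`τ` is the trace and `σ` the sum of the principal `2 × 2` minors, and one checks `τ = Λ₊ + Λ₋`
and `σ = Λ₊ Λ₋`. For a symmetric matrix the eigenvalues are the roots of the characteristic
polynomial. -/

open Polynomial Filter Topology

local notation "ℝ³" => EuclideanSpace ℝ (Fin 3)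

theorem Matrix.charpoly_fin_three {R : Type*} [CommRing R] (A : Matrix (Fin 3) (Fin 3) R) :
    A.charpoly = X ^ 3 - C A.trace * X ^ 2
      + C (A 0 0 * A 1 1 - A 0 1 * A 1 0 + A 0 0 * A 2 2 - A 0 2 * A 2 0
        + A 1 1 * A 2 2 - A 1 2 * A 2 1) * X - C A.det := by
  rw [Matrix.charpoly, Matrix.det_fin_three, Matrix.det_fin_three, Matrix.trace_fin_three]
  simp only [Matrix.charmatrix_apply, Matrix.diagonal_apply, Fin.isValue, Fin.reduceEq,
    if_true, if_false, map_add, map_sub, map_mul, zero_sub]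
  ring

theorem Matrix.roots_charpoly_fin_three_of_det_eq_zero {K : Type*} [Field K]
    (A : Matrix (Fin 3) (Fin 3) K) {p q : K} (htrace : A.trace = p + q)
    (hminors : A 0 0 * A 1 1 - A 0 1 * A 1 0 + A 0 0 * A 2 2 - A 0 2 * A 2 0
        + A 1 1 * A 2 2 - A 1 2 * A 2 1 = p * q)
    (hdet : A.det = 0) :
    A.charpoly.roots = {0, p, q} := by
  have hfactor : A.charpoly = (({0, p, q} : Multiset K).map fun r => X - C r).prod := by
    rw [A.charpoly_fin_three, htrace, hminors, hdet]
    simp only [Multiset.insert_eq_cons, Multiset.map_cons, Multiset.map_singleton,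
      Multiset.prod_cons, Multiset.prod_singleton, map_add, map_mul, map_zero]
    ring
  rw [hfactor, roots_multiset_prod_X_sub_C]

theorem Matrix.IsHermitian.eigenvalues_eq_roots_charpoly {n : Type*} [Fintype n] [DecidableEq n]
    {A : Matrix n n ℝ} (hA : A.IsHermitian) :
    Multiset.map hA.eigenvalues Finset.univ.val = A.charpoly.roots := by
  rw [hA.roots_charpoly_eq_eigenvalues]
  rfl

theorem fderiv_apply_eq_of_hasLineDerivAt {E : Type*} [NormedAddCommGroup E] [NormedSpace ℝ E]
    {f : E → ℝ} {x v : E} {f' : ℝ} (hf : DifferentiableAt ℝ f x)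
    (h : HasLineDerivAt ℝ f f' x v) : fderiv ℝ f x v = f' :=
  hf.lineDeriv_eq_fderiv.symm.trans h.lineDeriv

noncomputable def dPhi (l : ℝ) (y w : ℝ³) : ℝ :=
  l * (2 * y 0 * w 0 / (1 + y 2) + 2 * y 1 * w 1 / (1 - y 2)
    + (y 1 ^ 2 / (1 - y 2) ^ 2 - y 0 ^ 2 / (1 + y 2) ^ 2) * w 2)

noncomputable def d2Phi (l : ℝ) (x v w : ℝ³) : ℝ :=
  2 * l * (v 0 * w 0 / (1 + x 2) + v 1 * w 1 / (1 - x 2)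
    - x 0 * (v 0 * w 2 + v 2 * w 0) / (1 + x 2) ^ 2 + x 1 * (v 1 * w 2 + v 2 * w 1) / (1 - x 2) ^ 2
    + (x 0 ^ 2 / (1 + x 2) ^ 3 + x 1 ^ 2 / (1 - x 2) ^ 3) * v 2 * w 2)

theorem d2Phi_comm (l : ℝ) (x v w : ℝ³) : d2Phi l x v w = d2Phi l x w v := by
  unfold d2Phi
  ring

theorem hasLineDerivAt_Phi (l : ℝ) {y : ℝ³} (hp : 1 + y 2 ≠ 0) (hm : 1 - y 2 ≠ 0) (w : ℝ³) :
    HasLineDerivAt ℝ (Phi l) (dPhi l y w) y w := by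
  have hline (i : Fin 3) := (hasDerivAt_mul_const (x := 0) (w i)).const_add (y i)
  have h := ((((hline 0).pow 2).const_mul l).div ((hline 2).const_add 1) (by simpa using hp)).add
    ((((hline 1).pow 2).const_mul l).div ((hline 2).const_sub 1) (by simpa using hm))
  refine h.congr_deriv ?_
  simp only [Fin.isValue, Nat.cast_ofNat, zero_mul, add_zero, Nat.add_one_sub_one, pow_one,
    Pi.pow_apply, mul_neg, sub_neg_eq_add, dPhi]
  field_simp
  ring

theorem hasLineDerivAt_dPhi (l : ℝ) {x : ℝ³} (hp : 1 + x 2 ≠ 0) (hm : 1 - x 2 ≠ 0) (v w : ℝ³) :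
    HasLineDerivAt ℝ (dPhi l · w) (d2Phi l x v w) x v := by
  have hline (i : Fin 3) := (hasDerivAt_mul_const (x := 0) (v i)).const_add (x i)
  have hp' : 1 + (x 2 + 0 * v 2) ≠ 0 := by simpa using hp
  have hm' : 1 - (x 2 + 0 * v 2) ≠ 0 := by simpa using hm
  have h0 := (((hline 0).const_mul 2).mul_const (w 0)).div ((hline 2).const_add 1) hp'
  have h1 := (((hline 1).const_mul 2).mul_const (w 1)).div ((hline 2).const_sub 1) hm'
  have h2 := (((hline 1).pow 2).div (((hline 2).const_sub 1).pow 2) (pow_ne_zero 2 hm')).sub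
    (((hline 0).pow 2).div (((hline 2).const_add 1).pow 2) (pow_ne_zero 2 hp'))
  refine (((h0.add h1).add (h2.mul_const (w 2))).const_mul l).congr_deriv ?_
  simp only [Fin.isValue, zero_mul, add_zero, mul_neg, sub_neg_eq_add, Nat.cast_ofNat,
    Nat.add_one_sub_one, pow_one, Pi.pow_apply, d2Phi]
  field_simp
  ring

theorem fderiv_Phi_apply (l : ℝ) {y : ℝ³} (hp : 1 + y 2 ≠ 0) (hm : 1 - y 2 ≠ 0) (w : ℝ³) :
    fderiv ℝ (Phi l) y w = dPhi l y w :=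
  fderiv_apply_eq_of_hasLineDerivAt (by unfold Phi; fun_prop (disch := assumption))
    (hasLineDerivAt_Phi l hp hm w)

theorem fderiv_fderiv_Phi_apply (l : ℝ) {x : ℝ³} (hp : 1 + x 2 ≠ 0) (hm : 1 - x 2 ≠ 0)
    (v w : ℝ³) : fderiv ℝ (fun y => fderiv ℝ (Phi l) y w) x v = d2Phi l x v w := by
  have hnear : ∀ᶠ y in 𝓝 x, 1 + y 2 ≠ 0 ∧ 1 - y 2 ≠ 0 :=
    ((by fun_prop : Continuous fun y : ℝ³ => 1 + y 2).continuousAt.eventually_ne hp).and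
      ((by fun_prop : Continuous fun y : ℝ³ => 1 - y 2).continuousAt.eventually_ne hm)
  rw [EventuallyEq.fderiv_eq (hnear.mono fun y hy => fderiv_Phi_apply l hy.1 hy.2 w)]
  exact fderiv_apply_eq_of_hasLineDerivAt (by unfold dPhi; fun_prop (disch := simp [hp, hm]))
    (hasLineDerivAt_dPhi l hp hm v w)

theorem hess_Phi_apply (l : ℝ) {x : ℝ³} (hp : 1 + x 2 ≠ 0) (hm : 1 - x 2 ≠ 0) (i j : Fin 3) :
    hess (Phi l) x i j = d2Phi l x (EuclideanSpace.single i 1) (EuclideanSpace.single j 1) :=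
  fderiv_fderiv_Phi_apply l hp hm _ _

-- The factors `±1` are the sign argument of `Lam`, kept so that this rewrites the unfolded
-- product `Lam l x 1 * Lam l x (-1)`.
theorem mul_add_sqrt_mul_mul_sub_sqrt (c A : ℝ) {D : ℝ} (hD : 0 ≤ D) :
    c * (A + 1 * √D) * (c * (A + -1 * √D)) = c ^ 2 * (A ^ 2 - D) := by
  linear_combination (-c ^ 2) * Real.sq_sqrt hD

theorem hess_Phi_eigenvalues_general (l : ℝ)
    (x : EuclideanSpace ℝ (Fin 3)) (hx : |x 2| < 1) :
    ∃ h : (hess (Phi l) x).IsHermitian,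
      Multiset.map h.eigenvalues Finset.univ.val =
        ({0, Lam l x 1, Lam l x (-1)} : Multiset ℝ) := by
  obtain ⟨hp, hm⟩ : 0 < 1 + x 2 ∧ 0 < 1 - x 2 := by
    constructor <;> linarith [abs_lt.mp hx]
  have hsq : 1 - x 2 ^ 2 ≠ 0 := by nlinarith
  have hH : (hess (Phi l) x).IsHermitian := Matrix.IsHermitian.ext fun i j => by
    simp [hess_Phi_apply l hp.ne' hm.ne', d2Phi_comm]
  refine ⟨hH, ?_⟩
  rw [hH.eigenvalues_eq_roots_charpoly]
  refine (hess (Phi l) x).roots_charpoly_fin_three_of_det_eq_zero ?trace ?minors ?det <;>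
    simp only [Matrix.trace_fin_three, Matrix.det_fin_three, hess_Phi_apply l hp.ne' hm.ne', d2Phi,
      PiLp.single_eq_same, PiLp.single_eq_of_ne, ne_eq, Fin.reduceEq, not_false_eq_true]
  case trace =>
    simp only [Lam]
    field_simp
    ring
  case minors =>
    simp only [Lam]
    rw [mul_add_sqrt_mul_mul_sub_sqrt _ _ (by positivity)]
    field_simp
    ring
  case det =>
    field_simp
    ring

/-- For every `λ > 0` and `x` in the slab `{|x₃| < 1}`, the Hessian `D²Φ(x)` is real symmetric
and the multiset of its eigenvalues (with multiplicity) is `{0, Λ₊, Λ₋}`. -/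
theorem hess_Phi_eigenvalues (l : ℝ) (hl : 0 < l)
    (x : EuclideanSpace ℝ (Fin 3)) (hx : |x 2| < 1) :
    ∃ h : (hess (Phi l) x).IsHermitian,
      Multiset.map h.eigenvalues Finset.univ.val =
        ({0, Lam l x 1, Lam l x (-1)} : Multiset ℝ) :=
  hess_Phi_eigenvalues_general l x hx
end

section
/- Let A and B be n×n real symmetric matrices. If B − A is positive semidefinite, then F(A) ≤ F(B); if moreover B − A is positive definite, then F(A) < F(B). -/
/-!
Courant–Fischer: if `A ≤ B` in the Loewner order then, for every `k`, the `k`-th largest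
eigenvalue of `A` is at most that of `B`. Indeed the span of the top `k + 1` eigenvectors of `A`
and the span of the bottom `n - k` eigenvectors of `B` meet in some `x ≠ 0`, and
`λₖ(A) ‖x‖² ≤ ⟪A x, x⟫ ≤ ⟪B x, x⟫ ≤ λₖ(B) ‖x‖²`; this is strict when `B - A` is positive
definite. Summing the monotone (strictly monotone) `arctan` over the sorted eigenvalues gives
the claim.
-/

/-- The special Lagrangian operator `F(M) = Σᵢ arctan(λᵢ(M))` on real symmetric matrices
(junk value `0` if `M` is not symmetric). -/
noncomputable def Fop {n : ℕ} (M : Matrix (Fin n) (Fin n) ℝ) : ℝ :=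
  if h : M.IsHermitian then ∑ i, Real.arctan (h.eigenvalues i) else 0

open Module RCLike Matrix
open scoped InnerProductSpace ComplexOrder

theorem Submodule.inf_ne_bot_of_finrank_lt_add {K V : Type*} [DivisionRing K] [AddCommGroup V]
    [Module K V] [FiniteDimensional K V] {U W : Submodule K V}
    (h : finrank K V < finrank K U + finrank K W) : U ⊓ W ≠ ⊥ := by
  intro hUW
  have hsum := Submodule.finrank_sup_add_finrank_inf_eq U W
  rw [hUW, finrank_bot] at hsum
  have hsup := (U ⊔ W).finrank_le
  omega

namespace OrthonormalBasis

variable {𝕜 E ι : Type*} [RCLike 𝕜] [NormedAddCommGroup E] [InnerProductSpace 𝕜 E] [Fintype ι]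

theorem inner_eq_zero_of_mem_span_image (b : OrthonormalBasis ι 𝕜 E)
    {s : Set ι} {x : E} (hx : x ∈ Submodule.span 𝕜 (b '' s)) {i : ι} (hi : i ∉ s) :
    ⟪b i, x⟫_𝕜 = 0 := by
  rw [← b.repr_apply_apply, ← b.coe_toBasis_repr_apply]
  rw [← b.coe_toBasis, Basis.mem_span_image] at hx
  by_contra h
  exact hi (hx (Finsupp.mem_support_iff.2 h))

theorem finrank_span_image (b : OrthonormalBasis ι 𝕜 E) (s : Finset ι) :
    finrank 𝕜 (Submodule.span 𝕜 (b '' s)) = s.card := by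
  have hli := b.orthonormal.linearIndependent.comp _ (Subtype.val_injective (p := (· ∈ s)))
  rw [Set.image_eq_range]
  exact (finrank_span_eq_card hli).trans (by simp)

end OrthonormalBasis

namespace LinearMap.IsSymmetric

variable {𝕜 E : Type*} [RCLike 𝕜] [NormedAddCommGroup E] [InnerProductSpace 𝕜 E]
  [FiniteDimensional 𝕜 E] {n : ℕ} {T : E →ₗ[𝕜] E}

theorem re_inner_apply_self_eq_sum (hT : T.IsSymmetric) (hn : finrank 𝕜 E = n) (x : E) :
    re ⟪T x, x⟫_𝕜 =
      ∑ i, hT.eigenvalues hn i * ‖⟪hT.eigenvectorBasis hn i, x⟫_𝕜‖ ^ 2 := by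
  rw [← (hT.eigenvectorBasis hn).sum_inner_mul_inner, map_sum]
  refine Finset.sum_congr rfl fun i _ => ?_
  rw [hT, apply_eigenvectorBasis, inner_smul_right, ← inner_conj_symm x, mul_assoc,
    RCLike.conj_mul, ← ofReal_pow, ← ofReal_mul, ofReal_re]

theorem mul_norm_sq_le_re_inner_of_mem_span (hT : T.IsSymmetric) (hn : finrank 𝕜 E = n)
    {s : Set (Fin n)} {x : E} (hx : x ∈ Submodule.span 𝕜 (hT.eigenvectorBasis hn '' s))
    {c : ℝ} (hc : ∀ i ∈ s, c ≤ hT.eigenvalues hn i) :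
    c * ‖x‖ ^ 2 ≤ re ⟪T x, x⟫_𝕜 := by
  rw [hT.re_inner_apply_self_eq_sum hn, ← (hT.eigenvectorBasis hn).sum_sq_norm_inner_right,
    Finset.mul_sum]
  refine Finset.sum_le_sum fun i _ => ?_
  by_cases hi : i ∈ s
  · gcongr
    exact hc i hi
  · simp [(hT.eigenvectorBasis hn).inner_eq_zero_of_mem_span_image hx hi]

theorem re_inner_le_mul_norm_sq_of_mem_span (hT : T.IsSymmetric) (hn : finrank 𝕜 E = n)
    {s : Set (Fin n)} {x : E} (hx : x ∈ Submodule.span 𝕜 (hT.eigenvectorBasis hn '' s))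
    {c : ℝ} (hc : ∀ i ∈ s, hT.eigenvalues hn i ≤ c) :
    re ⟪T x, x⟫_𝕜 ≤ c * ‖x‖ ^ 2 := by
  rw [hT.re_inner_apply_self_eq_sum hn, ← (hT.eigenvectorBasis hn).sum_sq_norm_inner_right,
    Finset.mul_sum]
  refine Finset.sum_le_sum fun i _ => ?_
  by_cases hi : i ∈ s
  · gcongr
    exact hc i hi
  · simp [(hT.eigenvectorBasis hn).inner_eq_zero_of_mem_span_image hx hi]

theorem exists_ne_zero_eigenvalues_mul_norm_sq_le_and_le {S : E →ₗ[𝕜] E} (hT : T.IsSymmetric)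
    (hS : S.IsSymmetric) (hn : finrank 𝕜 E = n) (k : Fin n) :
    ∃ x ≠ 0, hT.eigenvalues hn k * ‖x‖ ^ 2 ≤ re ⟪T x, x⟫_𝕜 ∧
      re ⟪S x, x⟫_𝕜 ≤ hS.eigenvalues hn k * ‖x‖ ^ 2 := by
  set U := Submodule.span 𝕜 (hT.eigenvectorBasis hn '' ↑(Finset.Iic k))
  set W := Submodule.span 𝕜 (hS.eigenvectorBasis hn '' ↑(Finset.Ici k))
  have hUW : U ⊓ W ≠ ⊥ := by
    refine Submodule.inf_ne_bot_of_finrank_lt_add ?_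
    rw [OrthonormalBasis.finrank_span_image, OrthonormalBasis.finrank_span_image, Fin.card_Iic,
      Fin.card_Ici]
    omega
  obtain ⟨x, hx, hx0⟩ := (Submodule.ne_bot_iff _).1 hUW
  exact ⟨x, hx0,
    hT.mul_norm_sq_le_re_inner_of_mem_span hn (Submodule.mem_inf.1 hx).1
      fun i hi => hT.eigenvalues_antitone hn (Finset.mem_Iic.1 hi),
    hS.re_inner_le_mul_norm_sq_of_mem_span hn (Submodule.mem_inf.1 hx).2
      fun i hi => hS.eigenvalues_antitone hn (Finset.mem_Ici.1 hi)⟩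

theorem eigenvalues_le_of_re_inner_le {S : E →ₗ[𝕜] E} (hT : T.IsSymmetric) (hS : S.IsSymmetric)
    (hn : finrank 𝕜 E = n) (h : ∀ x, re ⟪T x, x⟫_𝕜 ≤ re ⟪S x, x⟫_𝕜) (k : Fin n) :
    hT.eigenvalues hn k ≤ hS.eigenvalues hn k := by
  obtain ⟨x, hx0, hTx, hSx⟩ := exists_ne_zero_eigenvalues_mul_norm_sq_le_and_le hT hS hn k
  exact le_of_mul_le_mul_right ((hTx.trans (h x)).trans hSx) (by positivity)

theorem eigenvalues_lt_of_re_inner_lt {S : E →ₗ[𝕜] E} (hT : T.IsSymmetric) (hS : S.IsSymmetric)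
    (hn : finrank 𝕜 E = n) (h : ∀ x ≠ 0, re ⟪T x, x⟫_𝕜 < re ⟪S x, x⟫_𝕜) (k : Fin n) :
    hT.eigenvalues hn k < hS.eigenvalues hn k := by
  obtain ⟨x, hx0, hTx, hSx⟩ := exists_ne_zero_eigenvalues_mul_norm_sq_le_and_le hT hS hn k
  exact lt_of_mul_lt_mul_right ((hTx.trans_lt (h x hx0)).trans_le hSx) (by positivity)

end LinearMap.IsSymmetric

theorem Matrix.re_inner_toEuclideanLin_apply_self {𝕜 ι : Type*} [RCLike 𝕜] [Fintype ι]
    [DecidableEq ι] (A : Matrix ι ι 𝕜) (x : EuclideanSpace 𝕜 ι) :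
    re ⟪toEuclideanLin A x, x⟫_𝕜 = re (star (WithLp.ofLp x) ⬝ᵥ (A *ᵥ WithLp.ofLp x)) := by
  rw [inner_re_symm, EuclideanSpace.inner_eq_star_dotProduct, ofLp_toLpLin, toLin'_apply,
    dotProduct_comm]

namespace Matrix.IsHermitian

variable {𝕜 ι : Type*} [RCLike 𝕜] [Fintype ι] [DecidableEq ι] {A B : Matrix ι ι 𝕜}

theorem eigenvalues₀_le_of_posSemidef_sub (hA : A.IsHermitian) (hB : B.IsHermitian)
    (h : (B - A).PosSemidef) (k : Fin (Fintype.card ι)) :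
    hA.eigenvalues₀ k ≤ hB.eigenvalues₀ k := by
  refine LinearMap.IsSymmetric.eigenvalues_le_of_re_inner_le _ _ _ (fun x => ?_) k
  have hx := h.re_dotProduct_nonneg (WithLp.ofLp x)
  rw [sub_mulVec, dotProduct_sub, map_sub, sub_nonneg] at hx
  simpa only [re_inner_toEuclideanLin_apply_self] using hx

theorem eigenvalues₀_lt_of_posDef_sub (hA : A.IsHermitian) (hB : B.IsHermitian)
    (h : (B - A).PosDef) (k : Fin (Fintype.card ι)) :
    hA.eigenvalues₀ k < hB.eigenvalues₀ k := by
  refine LinearMap.IsSymmetric.eigenvalues_lt_of_re_inner_lt _ _ _ (fun x hx => ?_) k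
  have hpos := h.re_dotProduct_pos (x := WithLp.ofLp x) (by simpa using hx)
  rw [sub_mulVec, dotProduct_sub, map_sub, sub_pos] at hpos
  simpa only [re_inner_toEuclideanLin_apply_self] using hpos

theorem sum_comp_eigenvalues_eq (hA : A.IsHermitian) (f : ℝ → ℝ) :
    ∑ i, f (hA.eigenvalues i) = ∑ k, f (hA.eigenvalues₀ k) :=
  Equiv.sum_comp (Fintype.equivOfCardEq (Fintype.card_fin _)).symm (f ∘ hA.eigenvalues₀)

theorem sum_comp_eigenvalues_le_of_posSemidef_sub (hA : A.IsHermitian) (hB : B.IsHermitian)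
    (h : (B - A).PosSemidef) {f : ℝ → ℝ} (hf : Monotone f) :
    ∑ i, f (hA.eigenvalues i) ≤ ∑ i, f (hB.eigenvalues i) := by
  rw [hA.sum_comp_eigenvalues_eq, hB.sum_comp_eigenvalues_eq]
  exact Finset.sum_le_sum fun k _ => hf (eigenvalues₀_le_of_posSemidef_sub hA hB h k)

theorem sum_comp_eigenvalues_lt_of_posDef_sub [Nonempty ι] (hA : A.IsHermitian)
    (hB : B.IsHermitian) (h : (B - A).PosDef) {f : ℝ → ℝ} (hf : StrictMono f) :
    ∑ i, f (hA.eigenvalues i) < ∑ i, f (hB.eigenvalues i) := by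
  rw [hA.sum_comp_eigenvalues_eq, hB.sum_comp_eigenvalues_eq]
  have : Nonempty (Fin (Fintype.card ι)) := ⟨⟨0, Fintype.card_pos⟩⟩
  exact Finset.sum_lt_sum_of_nonempty Finset.univ_nonempty
    fun k _ => hf (eigenvalues₀_lt_of_posDef_sub hA hB h k)

end Matrix.IsHermitian

/-- `F` is monotone: if `A`, `B` are real symmetric and `B − A` is positive semidefinite then
`F(A) ≤ F(B)`; if moreover `B − A` is positive definite then `F(A) < F(B)`. -/
theorem Fop_monotone {n : ℕ} (hn : 0 < n) (A B : Matrix (Fin n) (Fin n) ℝ)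
    (hA : A.IsHermitian) (hB : B.IsHermitian) :
    ((B - A).PosSemidef → Fop A ≤ Fop B) ∧ ((B - A).PosDef → Fop A < Fop B) := by
  have : Nonempty (Fin n) := ⟨⟨0, hn⟩⟩
  simp only [Fop, dif_pos hA, dif_pos hB]
  exact ⟨fun h => hA.sum_comp_eigenvalues_le_of_posSemidef_sub hB h
      Real.arctan_strictMono.monotone,
    fun h => hA.sum_comp_eigenvalues_lt_of_posDef_sub hB h Real.arctan_strictMono⟩
end

section
/- Let M be an n×n real symmetric matrix with eigenvalues λ₁, …, λₙ, and let ε > 0 be such that ε λᵢ < 1 for every i. Then I − εM is invertible, the matrix M̃ = (I − εM)⁻¹(εI + M) is symmetric with eigenvalues (ε + λᵢ)/(1 − ε λᵢ), and F(M̃) = F(M) + n · arctan(ε). -/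
open Matrix Polynomial in
private lemma charpoly_conj' {n : ℕ} (U V A : Matrix (Fin n) (Fin n) ℝ) (h : U * V = 1) :
    (U * A * V).charpoly = A.charpoly := by
  have h1 : (C : ℝ →+* ℝ[X]).mapMatrix U * (C : ℝ →+* ℝ[X]).mapMatrix V = 1 := by
    rw [← RingHom.map_mul, h]; simp
  have key : charmatrix (U * A * V) =
      (C : ℝ →+* ℝ[X]).mapMatrix U * charmatrix A * (C : ℝ →+* ℝ[X]).mapMatrix V := by
    unfold charmatrix
    rw [mul_sub, sub_mul]
    congr 1
    · rw [mul_assoc, scalar_commute _ (fun r => Commute.all _ _) _, ← mul_assoc, h1, one_mul]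
    · simp [mul_assoc]
  rw [Matrix.charpoly, key, det_mul, det_mul, Matrix.charpoly]
  have h2 := congrArg det h1
  rw [det_mul, det_one] at h2
  rw [mul_comm, ← mul_assoc, mul_comm ((C : ℝ →+* ℝ[X]).mapMatrix V).det, h2, one_mul]

open Matrix Polynomial in
private lemma charpoly_diag' {n : ℕ} (d : Fin n → ℝ) :
    (diagonal d).charpoly = ∏ i, (X - C (d i)) := by
  rw [charpoly_of_upperTriangular _ (blockTriangular_diagonal d)]
  simp

open Matrix Polynomial in
private lemma roots_prod' {n : ℕ} (f : Fin n → ℝ) :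
    (∏ i, (X - C (f i))).roots = Multiset.map f Finset.univ.val := by
  rw [← roots_multiset_prod_X_sub_C (Multiset.map f Finset.univ.val)]
  congr 1
  rw [Multiset.map_map]
  rfl

open Matrix Polynomial in
private lemma eig_multiset' {n : ℕ} (A : Matrix (Fin n) (Fin n) ℝ) (hA : A.IsHermitian)
    (U : Matrix (Fin n) (Fin n) ℝ) (d : Fin n → ℝ) (hU : U * star U = 1)
    (hUd : A = U * diagonal d * star U) :
    Multiset.map hA.eigenvalues Finset.univ.val = Multiset.map d Finset.univ.val := by
  have hspec : A = (hA.eigenvectorUnitary : Matrix (Fin n) (Fin n) ℝ) * diagonal hA.eigenvalues *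
      star (hA.eigenvectorUnitary : Matrix (Fin n) (Fin n) ℝ) := by
    simpa using hA.spectral_theorem
  have h1 : A.charpoly = ∏ i, (X - C (hA.eigenvalues i)) := by
    conv_lhs => rw [hspec]
    rw [charpoly_conj' _ _ _ (Unitary.mul_star_self_of_mem hA.eigenvectorUnitary.2),
      charpoly_diag']
  have h2 : A.charpoly = ∏ i, (X - C (d i)) := by
    conv_lhs => rw [hUd]
    rw [charpoly_conj' _ _ _ hU, charpoly_diag']
  have := congrArg Polynomial.roots (h1.symm.trans h2)
  rwa [roots_prod', roots_prod'] at this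

/-- If `M` is real symmetric with eigenvalues `λᵢ` and `ε > 0` satisfies `ελᵢ < 1` for all `i`,
then `I − εM` is invertible, `M̃ = (I − εM)⁻¹(εI + M)` is symmetric with eigenvalues
`(ε + λᵢ)/(1 − ελᵢ)` (as a multiset), and `F(M̃) = F(M) + n·arctan ε`. -/
theorem rotated_potential_hessian {n : ℕ} (M : Matrix (Fin n) (Fin n) ℝ)
    (hM : M.IsHermitian) (ε : ℝ) (hε : 0 < ε)
    (hsmall : ∀ i, ε * hM.eigenvalues i < 1) :
    IsUnit (1 - ε • M).det ∧
    ∃ h2 : ((1 - ε • M)⁻¹ * (ε • (1 : Matrix (Fin n) (Fin n) ℝ) + M)).IsHermitian,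
      Multiset.map h2.eigenvalues Finset.univ.val =
        Multiset.map (fun i => (ε + hM.eigenvalues i) / (1 - ε * hM.eigenvalues i))
          Finset.univ.val ∧
      Fop ((1 - ε • M)⁻¹ * (ε • (1 : Matrix (Fin n) (Fin n) ℝ) + M)) =
        Fop M + n * Real.arctan ε := by
  open Matrix in
  set U : Matrix (Fin n) (Fin n) ℝ := (hM.eigenvectorUnitary : Matrix (Fin n) (Fin n) ℝ) with hU
  set l : Fin n → ℝ := hM.eigenvalues with hl
  have hUV : U * star U = 1 := Unitary.mul_star_self_of_mem hM.eigenvectorUnitary.2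
  have hVU : star U * U = 1 := Unitary.star_mul_self_of_mem hM.eigenvectorUnitary.2
  have hspec : M = U * Matrix.diagonal l * star U := by simpa using hM.spectral_theorem
  have hne : ∀ i, 1 - ε * l i ≠ 0 := fun i => sub_ne_zero.2 (hsmall i).ne'
  have hmul : ∀ f g : Fin n → ℝ,
      (U * Matrix.diagonal f * star U) * (U * Matrix.diagonal g * star U)
      = U * Matrix.diagonal (fun i => f i * g i) * star U := by
    intro f g
    rw [mul_assoc (U * Matrix.diagonal f) (star U),
      ← mul_assoc (star U) (U * Matrix.diagonal g) (star U),
      ← mul_assoc (star U) U (Matrix.diagonal g), hVU, one_mul, ← mul_assoc,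
      mul_assoc U (Matrix.diagonal f) (Matrix.diagonal g), Matrix.diagonal_mul_diagonal]
  have A1 : (1 : Matrix (Fin n) (Fin n) ℝ) - ε • M
      = U * Matrix.diagonal (fun i => 1 - ε * l i) * star U := by
    have hd : Matrix.diagonal (fun i => 1 - ε * l i) =
        (1 : Matrix (Fin n) (Fin n) ℝ) - ε • Matrix.diagonal l := by
      ext i j; rcases eq_or_ne i j with h | h <;> simp [h]
    rw [hd, mul_sub, sub_mul, mul_one, hUV, mul_smul_comm, smul_mul_assoc, ← hspec]
  have A4 : ε • (1 : Matrix (Fin n) (Fin n) ℝ) + M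
      = U * Matrix.diagonal (fun i => ε + l i) * star U := by
    have hd : Matrix.diagonal (fun i => ε + l i) =
        ε • (1 : Matrix (Fin n) (Fin n) ℝ) + Matrix.diagonal l := by
      ext i j; rcases eq_or_ne i j with h | h <;> simp [h]
    rw [hd, mul_add, add_mul, mul_smul_comm, mul_one, smul_mul_assoc, hUV, ← hspec]
  have hdetU : U.det * (star U).det = 1 := by rw [← Matrix.det_mul, hUV, Matrix.det_one]
  have hdet : (1 - ε • M).det = ∏ i, (1 - ε * l i) := by
    rw [A1, Matrix.det_mul, Matrix.det_mul, mul_comm U.det, mul_assoc, hdetU, mul_one,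
      Matrix.det_diagonal]
  have hunit : IsUnit (1 - ε • M).det := by
    rw [hdet, isUnit_iff_ne_zero]
    exact Finset.prod_ne_zero_iff.2 fun i _ => hne i
  have Ainv : (1 - ε • M)⁻¹ = U * Matrix.diagonal (fun i => (1 - ε * l i)⁻¹) * star U := by
    apply Matrix.inv_eq_right_inv
    rw [A1, hmul]
    have h5 : (fun i => (1 - ε * l i) * (1 - ε * l i)⁻¹) = fun _ => (1 : ℝ) := by
      funext i; exact mul_inv_cancel₀ (hne i)
    rw [h5, Matrix.diagonal_one, mul_one, hUV]
  have A5 : (1 - ε • M)⁻¹ * (ε • (1 : Matrix (Fin n) (Fin n) ℝ) + M) =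
      U * Matrix.diagonal (fun i => (ε + l i) / (1 - ε * l i)) * star U := by
    rw [Ainv, A4, hmul]
    simp only [inv_mul_eq_div]
  have h2 : ((1 - ε • M)⁻¹ * (ε • (1 : Matrix (Fin n) (Fin n) ℝ) + M)).IsHermitian := by
    rw [A5, Matrix.star_eq_conjTranspose]
    exact Matrix.isHermitian_mul_mul_conjTranspose U (Matrix.isHermitian_diagonal _)
  have hms : Multiset.map h2.eigenvalues Finset.univ.val =
      Multiset.map (fun i => (ε + l i) / (1 - ε * l i)) Finset.univ.val :=
    eig_multiset' _ h2 U _ hUV A5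
  refine ⟨hunit, h2, hms, ?_⟩
  rw [Fop, Fop, dif_pos h2, dif_pos hM]
  have hsum1 : ∑ i, Real.arctan (h2.eigenvalues i)
      = ((Multiset.map h2.eigenvalues Finset.univ.val).map Real.arctan).sum := by
    rw [Multiset.map_map]; rfl
  rw [hsum1, hms, Multiset.map_map]
  have hsum2 : ((Multiset.map (Real.arctan ∘ fun i => (ε + l i) / (1 - ε * l i))
      Finset.univ.val)).sum = ∑ i, Real.arctan ((ε + l i) / (1 - ε * l i)) := rfl
  rw [hsum2]
  have hterm : ∀ i ∈ Finset.univ, Real.arctan ((ε + l i) / (1 - ε * l i))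
      = Real.arctan ε + Real.arctan (l i) := fun i _ => (Real.arctan_add (hsmall i)).symm
  rw [Finset.sum_congr rfl hterm, Finset.sum_add_distrib, Finset.sum_const, Finset.card_univ,
    Fintype.card_fin, nsmul_eq_mul]
  ring
end

section
/- Let f : ℝⁿ → ℝ be twice continuously differentiable with ∇f(0) = 0 and D²f(0) positive definite. Then there exist C > 0 and ε₀ > 0 such that for every 0 < ε ≤ ε₀, the connected component K_ε of the sublevel set {x : f(x) ≤ f(0) + ε} containing 0 is compact, convex, contained in the closed ball of radius C√ε centered at 0, and ∇f(x) ≠ 0 for every x ∈ ∂K_ε. -/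
/-!
By continuity, the bound `m ‖v‖² ≤ D²f(0)(v, v)` given by positive definiteness persists, with
`m/2`, on a closed ball `B(0, r)`. Integrating twice along segments then gives the first-order
strong convexity inequality `f x + Df(x)(y - x) + (m/4)‖y - x‖² ≤ f y` on that ball: `f` is convex
there, grows quadratically away from `0`, and has `0` as its only critical point. For small `ε`
the quadratic growth keeps `B(0, r) ∩ {f ≤ f(0) + ε}` away from the sphere of radius `r`, so this
convex compact set is open and closed in the sublevel set and is therefore `K_ε`. Its boundary
points differ from the interior point `0`, hence are not critical.
-/

open Metric Set Filter Topology

theorem add_deriv_add_half_le_of_le_deriv2 {g g' g'' : ℝ → ℝ} {c : ℝ}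
    (hg : ∀ t, HasDerivAt g (g' t) t) (hg' : ∀ t, HasDerivAt g' (g'' t) t)
    (hc : ∀ t ∈ Icc (0 : ℝ) 1, c ≤ g'' t) : g 0 + g' 0 + c / 2 ≤ g 1 := by
  have hg'_ge : ∀ t ∈ Icc (0 : ℝ) 1, c * t ≤ g' t - g' 0 := fun t ht => by
    simpa using (convex_Icc (0 : ℝ) 1).mul_sub_le_image_sub_of_le_deriv
      (fun t _ => (hg' t).continuousAt.continuousWithinAt)
      (fun t _ => (hg' t).differentiableAt.differentiableWithinAt)
      (fun t ht => (hg' t).deriv ▸ hc t (interior_subset ht)) 0 (left_mem_Icc.2 zero_le_one)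
      t ht ht.1
  have hh : ∀ t, HasDerivAt (fun t => g t - g' 0 * t - c / 2 * t ^ 2) (g' t - g' 0 - c * t) t :=
    fun t => (((hg t).sub ((hasDerivAt_id t).const_mul (g' 0))).sub
      ((hasDerivAt_pow 2 t).const_mul (c / 2))).congr_deriv (by simp; ring)
  have := (convex_Icc (0 : ℝ) 1).mul_sub_le_image_sub_of_le_deriv (C := 0)
    (fun t _ => (hh t).continuousAt.continuousWithinAt)
    (fun t _ => (hh t).differentiableAt.differentiableWithinAt)
    (fun t ht => by rw [(hh t).deriv]; linarith [hg'_ge t (interior_subset ht)])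
    0 (left_mem_Icc.2 zero_le_one) 1 (right_mem_Icc.2 zero_le_one) zero_le_one
  simp only [sub_zero, mul_one, one_pow, mul_zero, ne_eq, OfNat.ofNat_ne_zero, not_false_eq_true,
    zero_pow, sub_nonneg] at this
  linarith

theorem connectedComponentIn_eq_inter {X : Type*} [TopologicalSpace X] {A U V : Set X} {x : X}
    (hU : IsOpen U) (hV : IsClosed V) (hUV : U ⊆ V) (hVA : V ∩ A ⊆ U)
    (hpre : IsPreconnected (V ∩ A)) (hx : x ∈ V ∩ A) : connectedComponentIn A x = V ∩ A := by
  refine subset_antisymm (fun z hz => ?_) (hpre.subset_connectedComponentIn hx inter_subset_right)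
  have hzA := connectedComponentIn_subset A x hz
  have hcover : connectedComponentIn A x ⊆ U ∪ Vᶜ := fun w hw => by
    by_cases hwV : w ∈ V
    · exact Or.inl (hVA ⟨hwV, connectedComponentIn_subset A x hw⟩)
    · exact Or.inr hwV
  have hKU := isPreconnected_connectedComponentIn.subset_left_of_subset_union hU hV.isOpen_compl
    (disjoint_compl_right_iff_subset.2 hUV) hcover ⟨x, mem_connectedComponentIn hx.2, hVA hx⟩
  exact ⟨hUV (hKU hz), hzA⟩

theorem mem_interior_closedBall_inter_sublevel {X : Type*} [PseudoMetricSpace X] {f : X → ℝ}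
    {x₀ : X} {r ε : ℝ} (hf : ContinuousAt f x₀) (hr : 0 < r) (hε : 0 < ε) :
    x₀ ∈ interior (closedBall x₀ r ∩ {x | f x ≤ f x₀ + ε}) :=
  mem_interior_iff_mem_nhds.2 <|
    inter_mem (closedBall_mem_nhds x₀ hr) (hf.eventually (Iic_mem_nhds (lt_add_of_pos_right _ hε)))

section NormedSpace

variable {E : Type*} [NormedAddCommGroup E] [NormedSpace ℝ E]

theorem exists_pos_mul_sq_norm_le_of_pos [FiniteDimensional ℝ E] (B : E →L[ℝ] E →L[ℝ] ℝ)
    (hB : ∀ v ≠ 0, 0 < B v v) : ∃ m > 0, ∀ v, m * ‖v‖ ^ 2 ≤ B v v := by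
  rcases subsingleton_or_nontrivial E with hE | hE
  · exact ⟨1, one_pos, fun v => by simp [Subsingleton.elim v 0]⟩
  obtain ⟨u, hu, hmin⟩ := (isCompact_sphere (0 : E) 1).exists_isMinOn
    (NormedSpace.sphere_nonempty.2 zero_le_one)
    (by fun_prop : Continuous fun v => B v v).continuousOn
  refine ⟨B u u, hB u (ne_zero_of_mem_unit_sphere ⟨u, hu⟩), fun v => ?_⟩
  rcases eq_or_ne v 0 with rfl | hv
  · simp
  have hv' : 0 < ‖v‖ := norm_pos_iff.2 hv
  have := isMinOn_iff.1 hmin _ (show ‖v‖⁻¹ • v ∈ sphere (0 : E) 1 by simp [norm_smul, hv])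
  simp only [map_smul, FunLike.coe_smul, Pi.smul_apply, smul_eq_mul, ← mul_assoc] at this
  rwa [← sq, inv_pow, inv_mul_eq_div, le_div_iff₀ (by positivity)] at this

theorem eventually_mul_sq_norm_le {X : Type*} [TopologicalSpace X]
    {B : X → E →L[ℝ] E →L[ℝ] ℝ} {x₀ : X} (hB : ContinuousAt B x₀) {m m' : ℝ}
    (hm : ∀ v, m * ‖v‖ ^ 2 ≤ B x₀ v v) (hm' : m' < m) :
    ∀ᶠ x in 𝓝 x₀, ∀ v, m' * ‖v‖ ^ 2 ≤ B x v v := by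
  filter_upwards [hB.eventually (ball_mem_nhds (B x₀) (sub_pos.2 hm'))] with x hx v
  replace hx : ‖B x - B x₀‖ < m - m' := dist_eq_norm (B x) (B x₀) ▸ hx
  have hdiff : |B x v v - B x₀ v v| ≤ ‖B x - B x₀‖ * ‖v‖ * ‖v‖ := by
    simpa using (B x - B x₀).le_opNorm₂ v v
  nlinarith [abs_le.1 hdiff, hm v, sq_nonneg ‖v‖]

theorem hasDerivAt_comp_add_smul {F : Type*} [NormedAddCommGroup F] [NormedSpace ℝ F]
    {g : E → F} {x v : E} {t : ℝ} (hg : DifferentiableAt ℝ g (x + t • v)) :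
    HasDerivAt (fun s : ℝ => g (x + s • v)) (fderiv ℝ g (x + t • v) v) t :=
  hg.hasFDerivAt.comp_hasDerivAt t (((hasDerivAt_id t).smul_const v).const_add x |>.congr_deriv
    (one_smul ℝ v))

variable {f : E → ℝ}

theorem add_fderiv_add_le_of_le_fderiv_fderiv (hf : Differentiable ℝ f)
    (hf' : Differentiable ℝ (fderiv ℝ f)) {s : Set E} (hs : Convex ℝ s) {c : ℝ}
    (hc : ∀ z ∈ s, ∀ v, c * ‖v‖ ^ 2 ≤ fderiv ℝ (fderiv ℝ f) z v v) {x y : E} (hx : x ∈ s)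
    (hy : y ∈ s) : f x + fderiv ℝ f x (y - x) + c / 2 * ‖y - x‖ ^ 2 ≤ f y := by
  have := add_deriv_add_half_le_of_le_deriv2 (c := c * ‖y - x‖ ^ 2)
    (fun t => hasDerivAt_comp_add_smul (hf _))
    (fun t => (hasDerivAt_comp_add_smul (hf' _)).clm_apply (hasDerivAt_const t (y - x)))
    (fun t ht => by simpa using hc _ (hs.add_smul_sub_mem hx hy ht) (y - x))
  simp only [zero_smul, add_zero, one_smul, add_sub_cancel] at this
  linarith

theorem convexOn_of_le_add_fderiv {s : Set E} (hs : Convex ℝ s) {f' : E → E →L[ℝ] ℝ}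
    (h : ∀ x ∈ s, ∀ y ∈ s, f x + f' x (y - x) ≤ f y) : ConvexOn ℝ s f := by
  refine ⟨hs, fun x hx y hy a b ha hb hab => ?_⟩
  set z := a • x + b • y
  have hz : z ∈ s := hs hx hy ha hb hab
  have hsum : a • (x - z) + b • (y - z) = 0 := by
    rw [smul_sub, smul_sub, sub_add_sub_comm, ← add_smul, hab, one_smul, sub_self]
  have := congrArg (f' z) hsum
  simp only [map_add, map_smul, smul_eq_mul, map_zero] at this
  simp only [smul_eq_mul]
  linear_combination mul_le_mul_of_nonneg_left (h z hz x hx) ha +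
    mul_le_mul_of_nonneg_left (h z hz y hy) hb - this - f z * hab

theorem eq_of_le_add_fderiv_add_sq {s : Set E} {f' : E → E →L[ℝ] ℝ} {m : ℝ} (hm : 0 < m)
    (h : ∀ x ∈ s, ∀ y ∈ s, f x + f' x (y - x) + m * ‖y - x‖ ^ 2 ≤ f y) {x y : E} (hx : x ∈ s)
    (hy : y ∈ s) (hfx : f' x = 0) (hfy : f' y = 0) : x = y := by
  have hxy := h x hx y hy
  have hyx := h y hy x hx
  rw [hfx, zero_apply] at hxy
  rw [hfy, zero_apply, norm_sub_rev] at hyx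
  have : ‖y - x‖ ^ 2 = 0 := by nlinarith [sq_nonneg ‖y - x‖]
  exact (sub_eq_zero.1 (norm_eq_zero.1 (pow_eq_zero_iff two_ne_zero |>.1 this))).symm

theorem exists_pos_closedBall_add_fderiv_add_le [FiniteDimensional ℝ E] (hf : ContDiff ℝ 2 f)
    {x₀ : E} (hpos : ∀ v ≠ 0, 0 < fderiv ℝ (fderiv ℝ f) x₀ v v) :
    ∃ m > 0, ∃ r > 0, ∀ x ∈ closedBall x₀ r, ∀ y ∈ closedBall x₀ r,
      f x + fderiv ℝ f x (y - x) + m * ‖y - x‖ ^ 2 ≤ f y := by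
  have hf' : ContDiff ℝ 1 (fderiv ℝ f) := hf.fderiv_right le_rfl
  obtain ⟨m, hm, hmB⟩ := exists_pos_mul_sq_norm_le_of_pos _ hpos
  obtain ⟨r, hr, hB⟩ := nhds_basis_closedBall.eventually_iff.1 <|
    eventually_mul_sq_norm_le (hf'.continuous_fderiv one_ne_zero).continuousAt hmB (half_lt_self hm)
  refine ⟨m / 4, by positivity, r, hr, fun x hx y hy => ?_⟩
  have := add_fderiv_add_le_of_le_fderiv_fderiv (hf.differentiable two_ne_zero)
    (hf'.differentiable one_ne_zero) (convex_closedBall x₀ r) hB hx hy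
  linarith

theorem connectedComponentIn_sublevel_eq_inter_closedBall {x₀ : E} {m r ε : ℝ}
    (hconv : ConvexOn ℝ (closedBall x₀ r) f)
    (hgrowth : ∀ x ∈ closedBall x₀ r, f x₀ + m * ‖x - x₀‖ ^ 2 ≤ f x) (hr : 0 ≤ r) (hε : 0 ≤ ε)
    (hεr : ε < m * r ^ 2) :
    connectedComponentIn {x | f x ≤ f x₀ + ε} x₀ = closedBall x₀ r ∩ {x | f x ≤ f x₀ + ε} := by
  refine connectedComponentIn_eq_inter isOpen_ball isClosed_closedBall ball_subset_closedBall
    (fun x hx => ?_) (hconv.convex_le _).isPreconnected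
    ⟨mem_closedBall_self hr, le_add_of_nonneg_right hε⟩
  have hm : 0 < m := by nlinarith [sq_nonneg r]
  have : m * ‖x - x₀‖ ^ 2 < m * r ^ 2 := by linarith [hgrowth x hx.1, hx.2.out]
  rw [mem_ball, dist_eq_norm]
  exact lt_of_pow_lt_pow_left₀ 2 hr (lt_of_mul_lt_mul_left this hm.le)

end NormedSpace

theorem gradient_eq_zero_iff {𝕜 F : Type*} [RCLike 𝕜] [NormedAddCommGroup F]
    [InnerProductSpace 𝕜 F] [CompleteSpace F] {g : F → 𝕜} {x : F} :
    gradient g x = 0 ↔ fderiv 𝕜 g x = 0 :=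
  (InnerProductSpace.toDual 𝕜 F).symm.map_eq_zero_iff

section Hessian

open Matrix

variable {n : ℕ} {f : EuclideanSpace ℝ (Fin n) → ℝ} {x : EuclideanSpace ℝ (Fin n)}

theorem hess_eq_toMatrix₂ (hf : DifferentiableAt ℝ (fderiv ℝ f) x) :
    hess f x = LinearMap.toMatrix₂ (EuclideanSpace.basisFun (Fin n) ℝ).toBasis
      (EuclideanSpace.basisFun (Fin n) ℝ).toBasis
      (ContinuousLinearMap.toLinearMap₁₂ (fderiv ℝ (fderiv ℝ f) x)) := by
  ext i j
  simp [hess, fderiv_clm_apply hf (differentiableAt_const _)]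

theorem fderiv_fderiv_apply_eq_dotProduct_hess_mulVec (hf : DifferentiableAt ℝ (fderiv ℝ f) x)
    (v w : EuclideanSpace ℝ (Fin n)) :
    fderiv ℝ (fderiv ℝ f) x v w = WithLp.ofLp v ⬝ᵥ (hess f x *ᵥ WithLp.ofLp w) := by
  rw [hess_eq_toMatrix₂ hf]
  exact apply_eq_dotProduct_toMatrix₂_mulVec (EuclideanSpace.basisFun (Fin n) ℝ).toBasis
    (EuclideanSpace.basisFun (Fin n) ℝ).toBasis
    (ContinuousLinearMap.toLinearMap₁₂ (fderiv ℝ (fderiv ℝ f) x)) v w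

theorem fderiv_fderiv_apply_self_pos (hf : DifferentiableAt ℝ (fderiv ℝ f) x)
    (hpos : (hess f x).PosDef) {v : EuclideanSpace ℝ (Fin n)} (hv : v ≠ 0) :
    0 < fderiv ℝ (fderiv ℝ f) x v v := by
  rw [fderiv_fderiv_apply_eq_dotProduct_hess_mulVec hf]
  simpa using hpos.dotProduct_mulVec_pos (x := WithLp.ofLp v) (by simpa using hv)

end Hessian

/-- If `f` is `C²` with `∇f(0) = 0` and `D²f(0)` positive definite, then there are `C, ε₀ > 0`
such that for `0 < ε ≤ ε₀`, the connected component of `{f ≤ f(0) + ε}` containing `0` is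
compact, convex, contained in the closed ball of radius `C√ε`, and the gradient of `f` does not
vanish on its boundary. -/
theorem sublevel_component_of_nondegenerate_min {n : ℕ}
    (f : EuclideanSpace ℝ (Fin n) → ℝ) (hf : ContDiff ℝ 2 f)
    (hgrad : gradient f 0 = 0) (hpos : (hess f 0).PosDef) :
    ∃ C > (0 : ℝ), ∃ ε₀ > (0 : ℝ), ∀ ε : ℝ, 0 < ε → ε ≤ ε₀ →
      IsCompact (connectedComponentIn {x | f x ≤ f 0 + ε} 0) ∧
      Convex ℝ (connectedComponentIn {x | f x ≤ f 0 + ε} 0) ∧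
      connectedComponentIn {x | f x ≤ f 0 + ε} 0 ⊆
        Metric.closedBall 0 (C * Real.sqrt ε) ∧
      ∀ x ∈ frontier (connectedComponentIn {x | f x ≤ f 0 + ε} 0), gradient f x ≠ 0 := by
  have hf1 : Differentiable ℝ f := hf.differentiable two_ne_zero
  have hcrit : fderiv ℝ f 0 = 0 := gradient_eq_zero_iff.1 hgrad
  obtain ⟨m, hm, r, hr, hquad⟩ := exists_pos_closedBall_add_fderiv_add_le hf fun _ =>
    fderiv_fderiv_apply_self_pos ((hf.fderiv_right le_rfl).differentiable one_ne_zero _) hpos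
  have hconv : ConvexOn ℝ (closedBall 0 r) f := convexOn_of_le_add_fderiv (convex_closedBall 0 r)
    fun x hx y hy => by linarith [hquad x hx y hy, mul_nonneg hm.le (sq_nonneg ‖y - x‖)]
  have hgrowth : ∀ x ∈ closedBall 0 r, f 0 + m * ‖x - 0‖ ^ 2 ≤ f x := fun x hx => by
    simpa [hcrit] using hquad 0 (mem_closedBall_self hr.le) x hx
  -- quadratic growth confines the sublevel set to radius `√(ε / m)`, kept below `r` by `ε < m r²`
  refine ⟨√m⁻¹, by positivity, m * r ^ 2 / 2, by positivity, fun ε hε hεle => ?_⟩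
  rw [connectedComponentIn_sublevel_eq_inter_closedBall hconv hgrowth hr.le hε.le (by nlinarith)]
  have hclosed : IsClosed (closedBall 0 r ∩ {x | f x ≤ f 0 + ε}) :=
    isClosed_closedBall.inter (isClosed_le hf1.continuous continuous_const)
  refine ⟨(isCompact_closedBall 0 r).of_isClosed_subset hclosed inter_subset_left,
    hconv.convex_le _, fun x hx => ?_, fun x hx hgx => ?_⟩
  · rw [mem_closedBall_zero_iff, ← Real.sqrt_mul (inv_nonneg.2 hm.le)]
    refine Real.le_sqrt_of_sq_le ?_
    rw [inv_mul_eq_div, le_div_iff₀ hm]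
    linarith [sub_zero x ▸ hgrowth x hx.1, hx.2.out]
  · have hx0 := eq_of_le_add_fderiv_add_sq hm hquad (hclosed.frontier_subset hx).1
      (mem_closedBall_self hr.le) (gradient_eq_zero_iff.1 hgx) hcrit
    exact hx.2 (hx0 ▸ mem_interior_closedBall_inter_sublevel hf1.continuous.continuousAt hr hε)
end
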